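/- (Deterministic form of Lemma 2.5, null case.) Fix t ∈ ℝ, r ≥ 1, β > 0, δ > 0, c₀ > 0, and set ν_n = δn − c₀ and τ_n² = βn. Then lim_{n→∞} n^{r+1/2} · BF₁₀(t | τ_n², r; ν_n) = β^{−(r+1/2)} · [ ₁F₁(r+1/2, 1/2; t²/2) + (t/√2) · (Γ(r+1)/Γ(r+1/2)) · ₁F₁(r+1, 3/2; t²/2) ], where BF₁₀(t|τ²,r;ν) denotes the two-sided t Bayes factor with ν degrees of freedom. In particular BF₁₀(t|τ_n²,r;ν_n) = O(n^{−(r+1/2)}). -/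

import Mathlib

open Real MeasureTheory Filter Asymptotics

/-- Rising factorial (Pochhammer symbol) `(a)_k`. -/
noncomputable def risingFac (a : ℝ) (k : ℕ) : ℝ := (ascPochhammer ℝ k).eval a

/-- Confluent hypergeometric function `₁F₁(a, b; x)`. -/
noncomputable def oneF1 (a b x : ℝ) : ℝ :=
  ∑' k : ℕ, (risingFac a k / risingFac b k) * x ^ k / (Nat.factorial k : ℝ)

/-- Gaussian hypergeometric function `₂F₁(a, b, c; x)` (as a series). -/
noncomputable def twoF1 (a b c x : ℝ) : ℝ :=
  ∑' k : ℕ, (risingFac a k * risingFac b k / (risingFac c k * (Nat.factorial k : ℝ))) * x ^ k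

/-- The quantity `y = τ t / √((ν + t²)(1 + τ²))` in terms of `τ² = τsq`. -/
noncomputable def tArg (t τsq ν : ℝ) : ℝ :=
  Real.sqrt τsq * t / Real.sqrt ((ν + t ^ 2) * (1 + τsq))

/-- Two-sided `t` Bayes factor `BF₁₀(t | τ², r; ν)` with `ν` degrees of freedom,
as a function of `τ² = τsq`. -/
noncomputable def BF10t (t τsq r ν : ℝ) : ℝ :=
  (1 + τsq) ^ (-(r + 1 / 2)) *
    (twoF1 ((ν + 1) / 2) (r + 1 / 2) (1 / 2) (tArg t τsq ν ^ 2)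
      + tArg t τsq ν * (Real.Gamma (ν / 2 + 1) / Real.Gamma ((ν + 1) / 2)) *
          (Real.Gamma (r + 1) / Real.Gamma (r + 1 / 2)) *
          twoF1 (ν / 2 + 1) (r + 1) (3 / 2) (tArg t τsq ν ^ 2))

/-! Along any filter with `τ² → ∞` and `ν → ∞` we have `y² → 0` and `(ν + c) y² → t²`, so each
`₂F₁(a, b, c; y²)` with `a ≈ ν/2` converges termwise to `₁F₁(b, c; t²/2)`; dominated convergence
applies because eventually `(a)_k y^(2k) ≤ (2C)_k 2^(-k)`, the terms of a fixed convergent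
`₂F₁` series. Log-convexity of `Γ` gives `Γ(z + 1/2) / Γ z ~ √z`, hence
`y · Γ(ν/2 + 1) / Γ((ν + 1)/2) → t / √2`. Thus `(1 + τ²)^(r + 1/2) · BF₁₀` has the stated limit,
and with `τ² = βn` the prefactor `(n / (1 + βn))^(r + 1/2)` tends to `β^(-(r + 1/2))`. -/

open Topology

lemma risingFac_succ (a : ℝ) (k : ℕ) : risingFac a (k + 1) = risingFac a k * (a + k) := by
  simp [risingFac, ascPochhammer_succ_eval]

lemma risingFac_eq_prod (a : ℝ) (k : ℕ) :
    risingFac a k = ∏ j ∈ Finset.range k, (a + j) := by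
  induction k with
  | zero => simp [risingFac]
  | succ k ih => rw [risingFac_succ, ih, Finset.prod_range_succ]

lemma risingFac_pos {a : ℝ} (ha : 0 < a) (k : ℕ) : 0 < risingFac a k := by
  rw [risingFac_eq_prod]
  exact Finset.prod_pos fun j _ => by positivity

lemma risingFac_mul_pow (a x : ℝ) (k : ℕ) :
    risingFac a k * x ^ k = ∏ j ∈ Finset.range k, (a + j) * x := by
  rw [risingFac_eq_prod, Finset.prod_mul_distrib, Finset.prod_const, Finset.card_range]

lemma risingFac_mul_pow_le {a x A y : ℝ} (ha : 0 ≤ a) (hx : 0 ≤ x) (hxy : x ≤ y)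
    (haA : a * x ≤ A * y) (k : ℕ) : risingFac a k * x ^ k ≤ risingFac A k * y ^ k := by
  simp only [risingFac_mul_pow]
  refine Finset.prod_le_prod (fun j _ => by positivity) fun j _ => ?_
  nlinarith [mul_le_mul_of_nonneg_left hxy (Nat.cast_nonneg (α := ℝ) j)]

lemma tendsto_risingFac_mul_pow {ι : Type*} {l : Filter ι} {a x : ι → ℝ} {L : ℝ}
    (hx : Tendsto x l (𝓝 0)) (hax : Tendsto (fun i => a i * x i) l (𝓝 L)) (k : ℕ) :
    Tendsto (fun i => risingFac (a i) k * x i ^ k) l (𝓝 (L ^ k)) := by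
  simp only [risingFac_mul_pow]
  rw [show L ^ k = ∏ _j ∈ Finset.range k, L by simp]
  refine tendsto_finsetProd _ fun j _ => ?_
  simpa [add_mul] using hax.add (hx.const_mul (j : ℝ))

lemma tendsto_add_div_add_atTop (c d : ℝ) :
    Tendsto (fun x : ℝ => (x + c) / (x + d)) atTop (𝓝 1) := by
  have hd : Tendsto (fun x : ℝ => x + d) atTop atTop :=
    tendsto_atTop_add_const_right atTop d tendsto_id
  have h := (tendsto_const_nhds (x := c - d)).div_atTop hd
  rw [← add_zero (1 : ℝ)]
  refine (tendsto_const_nhds.add h).congr' ?_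
  filter_upwards [hd.eventually_gt_atTop 0] with x hx
  field_simp
  ring

lemma summable_twoF1_term {a b c x : ℝ} (ha : 0 < a) (hb : 0 < b) (hc : 0 < c)
    (hx₀ : 0 < x) (hx₁ : x < 1) :
    Summable fun k : ℕ =>
      risingFac a k * risingFac b k / (risingFac c k * (k.factorial : ℝ)) * x ^ k := by
  have hpos : ∀ k : ℕ, 0 < risingFac a k * risingFac b k /
      (risingFac c k * (k.factorial : ℝ)) * x ^ k := fun k => by
    have := risingFac_pos ha k; have := risingFac_pos hb k; have := risingFac_pos hc k
    positivity
  refine summable_of_ratio_test_tendsto_lt_one hx₁ (.of_forall fun k => (hpos k).ne') ?_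
  have hratio : ∀ k : ℕ, ‖risingFac a (k + 1) * risingFac b (k + 1) /
      (risingFac c (k + 1) * ((k + 1).factorial : ℝ)) * x ^ (k + 1)‖ /
      ‖risingFac a k * risingFac b k / (risingFac c k * (k.factorial : ℝ)) * x ^ k‖ =
      (k + a) / (k + c) * ((k + b) / (k + 1)) * x := fun k => by
    have := risingFac_pos ha k; have := risingFac_pos hb k; have := risingFac_pos hc k
    rw [Real.norm_of_nonneg (hpos _).le, Real.norm_of_nonneg (hpos _).le]
    simp only [risingFac_succ, Nat.factorial_succ, Nat.cast_mul, Nat.cast_succ, pow_succ]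
    field_simp
    ring
  simp only [hratio]
  have hlin (p q : ℝ) : Tendsto (fun k : ℕ => ((k : ℝ) + p) / (k + q)) atTop (𝓝 1) :=
    (tendsto_add_div_add_atTop p q).comp tendsto_natCast_atTop_atTop
  simpa using ((hlin a c).mul (hlin b 1)).mul_const x

theorem tendsto_twoF1_oneF1 {ι : Type*} {l : Filter ι} {b c L : ℝ} (hb : 0 < b) (hc : 0 < c)
    {a x : ι → ℝ} (ha : ∀ᶠ i in l, 0 < a i) (hx₀ : ∀ i, 0 ≤ x i)
    (hx : Tendsto x l (𝓝 0)) (hax : Tendsto (fun i => a i * x i) l (𝓝 L)) :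
    Tendsto (fun i => twoF1 (a i) b c (x i)) l (𝓝 (oneF1 b c L)) := by
  set C := |L| + 1
  have hbound : ∀ᶠ i in l, ∀ k : ℕ,
      ‖risingFac (a i) k * risingFac b k / (risingFac c k * (k.factorial : ℝ)) * x i ^ k‖ ≤
        risingFac (2 * C) k * risingFac b k / (risingFac c k * (k.factorial : ℝ)) *
          (1 / 2) ^ k := by
    filter_upwards [ha, hax.eventually_le_const (lt_of_le_of_lt (le_abs_self L) (lt_add_one _)),
      hx.eventually_le_const one_half_pos] with i hai haxi hxi k
    have := risingFac_pos hai k; have := risingFac_pos hb k; have := risingFac_pos hc k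
    have hle := risingFac_mul_pow_le hai.le (hx₀ i) hxi
      (by linarith : a i * x i ≤ 2 * C * (1 / 2)) k
    rw [Real.norm_of_nonneg (by have := hx₀ i; positivity)]
    calc _ = risingFac (a i) k * x i ^ k * (risingFac b k / (risingFac c k * k.factorial)) := by
          ring
      _ ≤ risingFac (2 * C) k * (1 / 2) ^ k *
            (risingFac b k / (risingFac c k * k.factorial)) := by gcongr
      _ = _ := by ring
  have hterm (k : ℕ) : Tendsto (fun i => risingFac (a i) k * risingFac b k /
      (risingFac c k * (k.factorial : ℝ)) * x i ^ k) l
      (𝓝 (risingFac b k / risingFac c k * L ^ k / (k.factorial : ℝ))) := by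
    convert (tendsto_risingFac_mul_pow hx hax k).mul_const
      (risingFac b k / (risingFac c k * (k.factorial : ℝ))) using 1
    · ext i; ring
    · congr 1; ring
  exact tendsto_tsum_of_dominated_convergence
    (summable_twoF1_term (by positivity) hb hc one_half_pos one_half_lt_one) hterm hbound

lemma Gamma_midpoint_sq_le {s t : ℝ} (hs : 0 < s) (ht : 0 < t) :
    Gamma ((s + t) / 2) ^ 2 ≤ Gamma s * Gamma t := by
  have h := Gamma_mul_add_mul_le_rpow_Gamma_mul_rpow_Gamma hs ht one_half_pos one_half_pos
    (by norm_num)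
  rw [← Real.sqrt_eq_rpow, ← Real.sqrt_eq_rpow, ← Real.sqrt_mul (Gamma_pos_of_pos hs).le,
    show 1 / 2 * s + 1 / 2 * t = (s + t) / 2 by ring] at h
  calc Gamma ((s + t) / 2) ^ 2 ≤ √(Gamma s * Gamma t) ^ 2 :=
        pow_le_pow_left₀ (Gamma_pos_of_pos (by positivity)).le h 2
    _ = Gamma s * Gamma t :=
        Real.sq_sqrt (mul_nonneg (Gamma_pos_of_pos hs).le (Gamma_pos_of_pos ht).le)

lemma tendsto_div_one_add_self_atTop : Tendsto (fun x : ℝ => x / (1 + x)) atTop (𝓝 1) := by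
  simpa [add_comm] using tendsto_add_div_add_atTop 0 1

/-- Log-convexity squeezes `(Γ(z + 1/2) / Γ z)² / z` between `z / (z + 1/2)` and `1`. -/
theorem tendsto_Gamma_add_half_div_Gamma_sq_div_self :
    Tendsto (fun z => (Gamma (z + 1 / 2) / Gamma z) ^ 2 / z) atTop (𝓝 1) := by
  have hlower : Tendsto (fun z : ℝ => (z + 0) / (z + 1 / 2)) atTop (𝓝 1) :=
    tendsto_add_div_add_atTop 0 (1 / 2)
  refine tendsto_of_tendsto_of_tendsto_of_le_of_le' hlower tendsto_const_nhds ?_ ?_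
  all_goals filter_upwards [eventually_gt_atTop 0] with z hz
  all_goals have hΓ := Gamma_pos_of_pos hz
  · have h := Gamma_midpoint_sq_le (show 0 < z + 1 / 2 by positivity)
      (show 0 < z + 3 / 2 by positivity)
    rw [show (z + 1 / 2 + (z + 3 / 2)) / 2 = z + 1 by ring,
      show z + 3 / 2 = z + 1 / 2 + 1 by ring, Gamma_add_one hz.ne',
      Gamma_add_one (by positivity)] at h
    rw [add_zero, div_le_div_iff₀ (by positivity) hz, div_pow, div_mul_eq_mul_div,
      le_div_iff₀ (by positivity)]
    nlinarith
  · have h := Gamma_midpoint_sq_le hz (show 0 < z + 1 by positivity)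
    rw [show (z + (z + 1)) / 2 = z + 1 / 2 by ring, Gamma_add_one hz.ne'] at h
    rw [div_le_one hz, div_pow, div_le_iff₀ (by positivity)]
    linarith

lemma tArg_eq (t : ℝ) {τsq ν : ℝ} (hτ : 0 ≤ τsq) :
    tArg t τsq ν = t * √(τsq / ((ν + t ^ 2) * (1 + τsq))) := by
  rw [tArg, Real.sqrt_div hτ]
  ring

section BayesFactorAsymptotics

variable {ι : Type*} {l : Filter ι} {τsq ν : ι → ℝ}

lemma tendsto_add_mul_div_mul_one_add (hτ : Tendsto τsq l atTop) (hν : Tendsto ν l atTop)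
    (t c : ℝ) :
    Tendsto (fun i => (ν i + c) * τsq i / ((ν i + t ^ 2) * (1 + τsq i))) l (𝓝 1) := by
  have h := ((tendsto_add_div_add_atTop c (t ^ 2)).comp hν).mul
    (tendsto_div_one_add_self_atTop.comp hτ)
  rw [one_mul] at h
  exact h.congr fun i => div_mul_div_comm _ _ _ _

lemma tendsto_add_mul_tArg_sq (hτ : Tendsto τsq l atTop) (hν : Tendsto ν l atTop) (t c : ℝ) :
    Tendsto (fun i => (ν i + c) * tArg t (τsq i) (ν i) ^ 2) l (𝓝 (t ^ 2)) := by
  have h := (tendsto_add_mul_div_mul_one_add hτ hν t c).const_mul (t ^ 2)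
  rw [mul_one] at h
  refine h.congr' ?_
  filter_upwards [hτ.eventually_ge_atTop 0,
    (tendsto_atTop_add_const_right l (t ^ 2) hν).eventually_ge_atTop 0] with i hτi hνi
  rw [tArg_eq t hτi, mul_pow, Real.sq_sqrt (by positivity)]
  ring

lemma tendsto_tArg_sq (hτ : Tendsto τsq l atTop) (hν : Tendsto ν l atTop) (t : ℝ) :
    Tendsto (fun i => tArg t (τsq i) (ν i) ^ 2) l (𝓝 0) := by
  have h := (tendsto_add_mul_tArg_sq hτ hν t 0).div_atTop hν
  refine h.congr' ?_
  filter_upwards [hν.eventually_gt_atTop 0] with i hi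
  field_simp
  ring

lemma tendsto_tArg_mul_Gamma_div_Gamma (hτ : Tendsto τsq l atTop) (hν : Tendsto ν l atTop)
    (t : ℝ) :
    Tendsto (fun i => tArg t (τsq i) (ν i) * (Gamma (ν i / 2 + 1) / Gamma ((ν i + 1) / 2)))
      l (𝓝 (t / √2)) := by
  have hz : Tendsto (fun i => (ν i + 1) / 2) l atTop :=
    (tendsto_atTop_add_const_right l 1 hν).atTop_div_const two_pos
  -- The gamma ratio `G` is positive, so with `z = (ν + 1)/2` we can write
  -- `y · G = t · √(1/2 · (ν + 1) τ² / ((ν + t²)(1 + τ²)) · G² / z)`.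
  have h := (((tendsto_add_mul_div_mul_one_add hτ hν t 1).mul
    (tendsto_Gamma_add_half_div_Gamma_sq_div_self.comp hz)).const_mul (1 / 2)).sqrt.const_mul t
  rw [mul_one, mul_one,
    show t * √(1 / 2) = t / √2 by rw [one_div, Real.sqrt_inv, div_eq_mul_inv]] at h
  refine h.congr' ?_
  filter_upwards [hτ.eventually_ge_atTop 0, hν.eventually_gt_atTop 0] with i hτi hνi
  have hΓ := Gamma_pos_of_pos (show 0 < (ν i + 1) / 2 by positivity)
  have hΓ' := Gamma_pos_of_pos (show 0 < ν i / 2 + 1 by positivity)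
  rw [tArg_eq t hτi, mul_assoc, ← Real.sqrt_sq (div_pos hΓ' hΓ).le,
    ← Real.sqrt_mul (by positivity)]
  congr 2
  simp only [Function.comp_apply]
  rw [show (ν i + 1) / 2 + 1 / 2 = ν i / 2 + 1 by ring]
  field_simp

theorem tendsto_one_add_rpow_mul_BF10t (hτ : Tendsto τsq l atTop) (hν : Tendsto ν l atTop)
    (t : ℝ) {r : ℝ} (hr : 0 < r + 1 / 2) :
    Tendsto (fun i => (1 + τsq i) ^ (r + 1 / 2) * BF10t t (τsq i) r (ν i)) l
      (𝓝 (oneF1 (r + 1 / 2) (1 / 2) (t ^ 2 / 2)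
        + t / √2 * (Gamma (r + 1) / Gamma (r + 1 / 2)) * oneF1 (r + 1) (3 / 2) (t ^ 2 / 2))) := by
  have hx := tendsto_tArg_sq hτ hν t
  have hF₁ : Tendsto
      (fun i => twoF1 ((ν i + 1) / 2) (r + 1 / 2) (1 / 2) (tArg t (τsq i) (ν i) ^ 2)) l
      (𝓝 (oneF1 (r + 1 / 2) (1 / 2) (t ^ 2 / 2))) :=
    tendsto_twoF1_oneF1 hr one_half_pos
      (((tendsto_atTop_add_const_right l 1 hν).atTop_div_const two_pos).eventually_gt_atTop 0)
      (fun _ => sq_nonneg _) hx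
      (((tendsto_add_mul_tArg_sq hτ hν t 1).div_const 2).congr fun i => by ring)
  have hF₂ : Tendsto (fun i => twoF1 (ν i / 2 + 1) (r + 1) (3 / 2) (tArg t (τsq i) (ν i) ^ 2))
      l (𝓝 (oneF1 (r + 1) (3 / 2) (t ^ 2 / 2))) :=
    tendsto_twoF1_oneF1 (by linarith) (by norm_num)
      (((hν.atTop_div_const two_pos).atTop_add tendsto_const_nhds).eventually_gt_atTop 0)
      (fun _ => sq_nonneg _) hx
      (((tendsto_add_mul_tArg_sq hτ hν t 2).div_const 2).congr fun i => by ring)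
  have hW := (tendsto_tArg_mul_Gamma_div_Gamma hτ hν t).mul_const
    (Gamma (r + 1) / Gamma (r + 1 / 2))
  refine (hF₁.add (hW.mul hF₂)).congr' ?_
  filter_upwards [hτ.eventually_ge_atTop 0] with i hτi
  rw [BF10t, ← mul_assoc, Real.rpow_neg (by positivity),
    mul_inv_cancel₀ (Real.rpow_pos_of_pos (by positivity) _).ne', one_mul]

end BayesFactorAsymptotics

lemma isBigO_rpow_neg_of_tendsto_rpow_mul {f : ℕ → ℝ} {s L : ℝ}
    (h : Tendsto (fun n : ℕ => (n : ℝ) ^ s * f n) atTop (𝓝 L)) :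
    f =O[atTop] fun n : ℕ => (n : ℝ) ^ (-s) := by
  refine ((h.isBigO_one ℝ).mul (isBigO_refl (fun n : ℕ => (n : ℝ) ^ (-s)) atTop)).congr' ?_
    (.of_forall fun n => one_mul _)
  filter_upwards [eventually_gt_atTop 0] with n hn
  rw [mul_right_comm, ← Real.rpow_add (by positivity), add_neg_cancel, Real.rpow_zero, one_mul]

theorem lemma25_null_general (t r β δ c₀ : ℝ) (hr : 1 ≤ r) (hβ : 0 < β) (hδ : 0 < δ) :
    Tendsto (fun n : ℕ => (n : ℝ) ^ (r + 1 / 2) * BF10t t (β * n) r (δ * n - c₀)) atTop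
      (nhds (β ^ (-(r + 1 / 2)) *
        (oneF1 (r + 1 / 2) (1 / 2) (t ^ 2 / 2)
          + (t / Real.sqrt 2) * (Real.Gamma (r + 1) / Real.Gamma (r + 1 / 2)) *
              oneF1 (r + 1) (3 / 2) (t ^ 2 / 2)))) ∧
    (fun n : ℕ => BF10t t (β * n) r (δ * n - c₀)) =O[atTop]
      fun n : ℕ => (n : ℝ) ^ (-(r + 1 / 2)) := by
  have hτ : Tendsto (fun n : ℕ => β * n) atTop atTop :=
    tendsto_natCast_atTop_atTop.const_mul_atTop hβ
  have hν : Tendsto (fun n : ℕ => δ * n - c₀) atTop atTop :=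
    tendsto_atTop_add_const_right atTop (-c₀) (tendsto_natCast_atTop_atTop.const_mul_atTop hδ)
  have hscale : Tendsto (fun n : ℕ => ((n : ℝ) / (1 + β * n)) ^ (r + 1 / 2)) atTop
      (𝓝 (β ^ (-(r + 1 / 2)))) := by
    have h := ((tendsto_div_one_add_self_atTop.comp hτ).const_mul β⁻¹).rpow_const
      (p := r + 1 / 2) (.inr (by linarith))
    rw [mul_one, Real.inv_rpow hβ.le, ← Real.rpow_neg hβ.le] at h
    refine h.congr fun n => ?_
    simp only [Function.comp_apply]
    field_simp
  have hlim := (hscale.mul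
      (tendsto_one_add_rpow_mul_BF10t hτ hν t (r := r) (by linarith))).congr' <| by
    filter_upwards [eventually_gt_atTop 0] with n hn
    rw [← mul_assoc, ← Real.mul_rpow (by positivity) (by positivity),
      div_mul_cancel₀ _ (by positivity)]
  exact ⟨hlim, isBigO_rpow_neg_of_tendsto_rpow_mul hlim⟩

/-- Deterministic form of Lemma 2.5, null case. -/
theorem lemma25_null (t r β δ c₀ : ℝ) (hr : 1 ≤ r) (hβ : 0 < β) (hδ : 0 < δ)
    (hc₀ : 0 < c₀) :
    Tendsto (fun n : ℕ => (n : ℝ) ^ (r + 1 / 2) * BF10t t (β * n) r (δ * n - c₀)) atTop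
      (nhds (β ^ (-(r + 1 / 2)) *
        (oneF1 (r + 1 / 2) (1 / 2) (t ^ 2 / 2)
          + (t / Real.sqrt 2) * (Real.Gamma (r + 1) / Real.Gamma (r + 1 / 2)) *
              oneF1 (r + 1) (3 / 2) (t ^ 2 / 2)))) ∧
    (fun n : ℕ => BF10t t (β * n) r (δ * n - c₀)) =O[atTop]
      fun n : ℕ => (n : ℝ) ^ (-(r + 1 / 2)) :=
  lemma25_null_general t r β δ c₀ hr hβ hδ
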